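/- arXiv:2105.04797 — 2 statements merged into one kernel-verified Lean document; each statement's English description precedes it below -/
import Mathlib

section
/- The lift Λ((P,V),(U₁,U₂)) = (V + U₁, [V,U₁] − U₂) is equivariant: Ad_{(A,a)} Λ(ξ, U) = Λ(φ_{(A,a)⁻¹}(ξ), ψ_{(A,a)⁻¹}(U)) for all (A,a) ∈ G ⋉ 𝔤, ξ = (P,V) ∈ G × 𝔤, U = (U₁,U₂) ∈ 𝔤 × 𝔤. Explicitly, (Ad_A(V+U₁), Ad_A([V,U₁] − U₂) − [Ad_A(V+U₁), a]) = Λ((P A⁻¹, Ad_A(V + Ad_{A⁻¹}a)), (Ad_A(U₁ − Ad_{A⁻¹}a), Ad_A U₂)). -/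
open Matrix

/-- `Ad_A x = A x A⁻¹` (matrix nonsingular inverse). -/
noncomputable def Ad {n : ℕ} (A x : Matrix (Fin n) (Fin n) ℝ) : Matrix (Fin n) (Fin n) ℝ :=
  A * x * A⁻¹

/-- Semi-direct product multiplication `(A,a)·(B,b) = (AB, a + Ad_A b)`. -/
noncomputable def sdpMul {n : ℕ} (p q : Matrix (Fin n) (Fin n) ℝ × Matrix (Fin n) (Fin n) ℝ) :
    Matrix (Fin n) (Fin n) ℝ × Matrix (Fin n) (Fin n) ℝ :=
  (p.1 * q.1, p.2 + Ad p.1 q.2)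

/-- The state action `φ((A,a),(P,V)) = (PA, Ad_{A⁻¹}(V - a))`. -/
noncomputable def phi {n : ℕ} (X ξ : Matrix (Fin n) (Fin n) ℝ × Matrix (Fin n) (Fin n) ℝ) :
    Matrix (Fin n) (Fin n) ℝ × Matrix (Fin n) (Fin n) ℝ :=
  (ξ.1 * X.1, Ad X.1⁻¹ (ξ.2 - X.2))

/-- The input action `ψ((A,a),(U₁,U₂)) = (Ad_{A⁻¹}(U₁ + a), Ad_{A⁻¹} U₂)`. -/
noncomputable def psi {n : ℕ} (X U : Matrix (Fin n) (Fin n) ℝ × Matrix (Fin n) (Fin n) ℝ) :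
    Matrix (Fin n) (Fin n) ℝ × Matrix (Fin n) (Fin n) ℝ :=
  (Ad X.1⁻¹ (U.1 + X.2), Ad X.1⁻¹ U.2)

/-- The matrix commutator (Lie bracket) `[x,y] = xy - yx`. -/
def lieB {n : ℕ} (x y : Matrix (Fin n) (Fin n) ℝ) : Matrix (Fin n) (Fin n) ℝ :=
  x * y - y * x

/-- The lift `Λ((P,V),(U₁,U₂)) = (V + U₁, [V,U₁] - U₂)`. -/
def lift {n : ℕ} (ξ U : Matrix (Fin n) (Fin n) ℝ × Matrix (Fin n) (Fin n) ℝ) :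
    Matrix (Fin n) (Fin n) ℝ × Matrix (Fin n) (Fin n) ℝ :=
  (ξ.2 + U.1, lieB ξ.2 U.1 - U.2)

/-- Semi-direct product inverse `(A,a)⁻¹ = (A⁻¹, -Ad_{A⁻¹} a)`. -/
noncomputable def sdpInv {n : ℕ} (X : Matrix (Fin n) (Fin n) ℝ × Matrix (Fin n) (Fin n) ℝ) :
    Matrix (Fin n) (Fin n) ℝ × Matrix (Fin n) (Fin n) ℝ :=
  (X.1⁻¹, -Ad X.1⁻¹ X.2)

/-- The Adjoint of the semi-direct product group:
`Ad_{(A,a)}(w₁,w₂) = (Ad_A w₁, Ad_A w₂ - [Ad_A w₁, a])`. -/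
noncomputable def sdpAd {n : ℕ} (X w : Matrix (Fin n) (Fin n) ℝ × Matrix (Fin n) (Fin n) ℝ) :
    Matrix (Fin n) (Fin n) ℝ × Matrix (Fin n) (Fin n) ℝ :=
  (Ad X.1 w.1, Ad X.1 w.2 - lieB (Ad X.1 w.1) X.2)

/-- equivariance of the lift:
`Ad_{(A,a)} Λ(ξ,U) = Λ(φ_{(A,a)⁻¹}(ξ), ψ_{(A,a)⁻¹}(U))`. -/
theorem lift_equivariant {n : ℕ} (A a P V U₁ U₂ : Matrix (Fin n) (Fin n) ℝ)
    (hA : IsUnit A) :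
    sdpAd (A, a) (lift (P, V) (U₁, U₂)) =
      lift (phi (sdpInv (A, a)) (P, V)) (psi (sdpInv (A, a)) (U₁, U₂)) := by
  have hd : IsUnit A.det := (Matrix.isUnit_iff_isUnit_det A).mp hA
  have h1 : A * A⁻¹ = 1 := Matrix.mul_nonsing_inv A hd
  have h2 : A⁻¹ * A = 1 := Matrix.nonsing_inv_mul A hd
  have h3 : A⁻¹⁻¹ = A := Matrix.nonsing_inv_nonsing_inv A hd
  have e1 : ∀ x : Matrix (Fin n) (Fin n) ℝ, A * (A⁻¹ * x) = x := by
    intro x; rw [← Matrix.mul_assoc, h1, Matrix.one_mul]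
  have e2 : ∀ x : Matrix (Fin n) (Fin n) ℝ, A⁻¹ * (A * x) = x := by
    intro x; rw [← Matrix.mul_assoc, h2, Matrix.one_mul]
  simp only [sdpAd, lift, phi, psi, sdpInv, Ad, lieB, h3, Prod.mk.injEq]
  constructor <;>
  · simp [mul_add, add_mul, mul_sub, sub_mul, Matrix.mul_assoc, e1, e2, h1, h2,
      sub_eq_add_neg, neg_add, neg_neg, mul_neg, neg_mul]
    abel
end

section
/- Modified Barbalat lemma: let Z : [0,∞) → ℝ^{n} be differentiable with Ż(t) = N(t) + M(t), where N is uniformly continuous, Z(t) → C as t → ∞ for some constant C, and M(t) → 0 as t → ∞. Then Ż(t) → 0 as t → ∞. -/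
open Filter Topology

/-- modified Barbalat lemma: if `Ż(t) = N(t) + M(t)` on `[0,∞)` with `N`
uniformly continuous on `[0,∞)`, `Z(t) → C` and `M(t) → 0` as `t → ∞`, then
`Ż(t) = N(t) + M(t) → 0` as `t → ∞`. -/
theorem modified_barbalat {n : ℕ} (Z N M : ℝ → (Fin n → ℝ)) (C : Fin n → ℝ)
    (hderiv : ∀ t ∈ Set.Ici (0 : ℝ), HasDerivAt Z (N t + M t) t)
    (hN : UniformContinuousOn N (Set.Ici 0))
    (hZ : Tendsto Z atTop (𝓝 C))
    (hM : Tendsto M atTop (𝓝 0)) :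
    Tendsto (fun t => N t + M t) atTop (𝓝 0) := by
  have hN0 : Tendsto N atTop (𝓝 0) := by
    rw [NormedAddCommGroup.tendsto_nhds_zero]
    intro ε hε
    obtain ⟨δ, hδ, hδN⟩ := Metric.uniformContinuousOn_iff.1 hN (ε/4) (by linarith)
    set h : ℝ := δ/2 with hh
    have hhpos : 0 < h := by positivity
    obtain ⟨T₁, hT₁⟩ := Metric.tendsto_atTop.1 hZ (ε*h/8) (by positivity)
    obtain ⟨T₂, hT₂⟩ := Metric.tendsto_atTop.1 hM (ε/4) (by linarith)
    rw [eventually_atTop]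
    refine ⟨max 0 (max T₁ T₂), fun t ht => ?_⟩
    have ht0 : (0:ℝ) ≤ t := le_trans (le_max_left _ _) ht
    have ht1 : T₁ ≤ t := le_trans (le_trans (le_max_left _ _) (le_max_right _ _)) ht
    have ht2 : T₂ ≤ t := le_trans (le_trans (le_max_right _ _) (le_max_right _ _)) ht
    have key : ∀ x ∈ Set.Icc t (t+h), HasDerivWithinAt (fun s => Z s - s • N t)
        ((fun s => N s + M s - N t) x) (Set.Icc t (t+h)) x := by
      intro x hx
      have hx0 : (0:ℝ) ≤ x := le_trans ht0 hx.1
      have h1 : HasDerivAt (fun s : ℝ => s • N t) ((1:ℝ) • N t) x :=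
        (hasDerivAt_id x).smul_const (N t)
      have h2 := (hderiv x hx0).sub h1
      have h3 := h2.hasDerivWithinAt (s := Set.Icc t (t+h))
      rw [one_smul] at h3
      exact h3
    have bound : ∀ x ∈ Set.Ico t (t+h), ‖N x + M x - N t‖ ≤ ε/2 := by
      intro x hx
      have hx0 : (0:ℝ) ≤ x := le_trans ht0 hx.1
      have hdist : dist x t < δ := by
        rw [Real.dist_eq, abs_of_nonneg (by linarith [hx.1])]
        have := hx.2
        rw [hh] at *
        linarith
      have hNN : ‖N x - N t‖ < ε/4 := by
        have := hδN x hx0 t ht0 hdist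
        rwa [dist_eq_norm] at this
      have hMx : ‖M x‖ < ε/4 := by
        have := hT₂ x (le_trans ht2 hx.1)
        rwa [dist_zero_right] at this
      calc ‖N x + M x - N t‖ = ‖(N x - N t) + M x‖ := by ring_nf
        _ ≤ ‖N x - N t‖ + ‖M x‖ := norm_add_le _ _
        _ ≤ ε/2 := by linarith
    have mvt := norm_image_sub_le_of_norm_deriv_le_segment' key bound (t+h)
      ⟨by linarith, le_refl _⟩
    -- mvt : ‖(Z (t+h) - (t+h) • N t) - (Z t - t • N t)‖ ≤ ε/2 * (t + h - t)
    have heq : (Z (t+h) - (t+h) • N t) - (Z t - t • N t)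
        = (Z (t+h) - Z t) - h • N t := by
      rw [add_smul]; abel
    rw [heq] at mvt
    have hZb : ‖Z (t+h) - Z t‖ < ε*h/4 := by
      have h1 := hT₁ (t+h) (by linarith)
      have h2 := hT₁ t ht1
      have := dist_triangle_right (Z (t+h)) (Z t) C
      rw [dist_eq_norm] at this
      linarith
    have hnorm : h * ‖N t‖ = ‖h • N t‖ := by
      rw [norm_smul, Real.norm_eq_abs, abs_of_pos hhpos]
    have step : h * ‖N t‖ ≤ ‖(Z (t+h) - Z t) - h • N t‖ + ‖Z (t+h) - Z t‖ := by
      rw [hnorm]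
      calc ‖h • N t‖ = ‖(Z (t+h) - Z t) - ((Z (t+h) - Z t) - h • N t)‖ := by
            rw [sub_sub_cancel]
        _ ≤ ‖(Z (t+h) - Z t) - h • N t‖ + ‖Z (t+h) - Z t‖ := by
            linarith [norm_sub_le (Z (t+h) - Z t) ((Z (t+h) - Z t) - h • N t)]
    have hfinal : h * ‖N t‖ < ε * h := by
      have : ε/2 * (t + h - t) = ε * h / 2 := by ring
      rw [this] at mvt
      have hpos : 0 < ε * h := by positivity
      linarith
    have := (mul_lt_mul_iff_right₀ hhpos).1 (by linarith [hfinal] : h * ‖N t‖ < h * ε)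
    linarith
  simpa using hN0.add hM
end
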